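/- For every nonnegative integer K and every p with 1 ≤ p ≤ ∞, the p-norm network distance d_{N,p} is a pseudometric on the space of K-order networks modulo isomorphism: for all K-order networks N_X, N_Y, N_Z it satisfies (i) d_{N,p}(N_X,N_Y) ≥ 0, (ii) d_{N,p}(N_X,N_Y) = d_{N,p}(N_Y,N_X), (iii) if N_X and N_Y are isomorphic then d_{N,p}(N_X,N_Y) = 0, and (iv) d_{N,p}(N_X,N_Y) ≤ d_{N,p}(N_X,N_Z) + d_{N,p}(N_Z,N_Y). -/

import Mathlib

open scoped ENNReal

/-- A correspondence between node sets `X` and `Y`: a set of pairs in which every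
`x : X` and every `y : Y` appears. -/
def IsCorrespondence {X Y : Type} (C : Set (X × Y)) : Prop :=
  (∀ x : X, ∃ y : Y, (x, y) ∈ C) ∧ (∀ y : Y, ∃ x : X, (x, y) ∈ C)

/-- The rank of a tuple: the number of distinct elements appearing in it. -/
noncomputable def tupleRank {X : Type} {n : ℕ} (t : Fin n → X) : ℕ :=
  Set.ncard (Set.range t)

/-- A `K`-order network on a finite nonempty node set `X`: relationship functions
`r k : X^{k+1} → [0,1]` for `0 ≤ k ≤ K`, symmetric under permutations of the arguments,
and such that any subtuple with the same set of distinct elements as the full tuple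
carries the same relationship value. -/
structure HONetwork (K : ℕ) (X : Type) [Fintype X] [Nonempty X] : Type where
  r : ∀ k : ℕ, (Fin (k + 1) → X) → ℝ
  r_nonneg : ∀ k, k ≤ K → ∀ t : Fin (k + 1) → X, 0 ≤ r k t
  r_le_one : ∀ k, k ≤ K → ∀ t : Fin (k + 1) → X, r k t ≤ 1
  symm : ∀ k, k ≤ K → ∀ (t : Fin (k + 1) → X) (σ : Equiv.Perm (Fin (k + 1))),
    r k (t ∘ σ) = r k t
  identity : ∀ k, k ≤ K → ∀ k', k' ≤ K → ∀ (t : Fin (k + 1) → X)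
    (ι : Fin (k' + 1) → Fin (k + 1)), StrictMono ι →
    Set.range (t ∘ ι) = Set.range t → r k' (t ∘ ι) = r k t

/-- The `k`-order network difference `Γ^k_{X,Y}(C)`: the largest value of
`|r_X^k(x_{0:k}) − r_Y^k(y_{0:k})|` over tuples of pairs of correspondents in `C`. -/
noncomputable def Gamma {K : ℕ} {X Y : Type} [Fintype X] [Nonempty X] [Fintype Y] [Nonempty Y]
    (NX : HONetwork K X) (NY : HONetwork K Y) (k : ℕ) (C : Set (X × Y)) : ℝ :=
  sSup { v : ℝ | ∃ (tx : Fin (k + 1) → X) (ty : Fin (k + 1) → Y),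
    (∀ i, (tx i, ty i) ∈ C) ∧ v = |NX.r k tx - NY.r k ty| }

/-- The `k`-order network distance: minimum of `Γ^k_{X,Y}(C)` over correspondences `C`. -/
noncomputable def dN {K : ℕ} {X Y : Type} [Fintype X] [Nonempty X] [Fintype Y] [Nonempty Y]
    (k : ℕ) (NX : HONetwork K X) (NY : HONetwork K Y) : ℝ :=
  sInf { v : ℝ | ∃ C : Set (X × Y), IsCorrespondence C ∧ v = Gamma NX NY k C }

/-- The `p`-norm of a vector in `ℝ^{K+1}`, `1 ≤ p ≤ ∞`. -/
noncomputable def pNorm (K : ℕ) (p : ℝ≥0∞) [Fact (1 ≤ p)] (v : Fin (K + 1) → ℝ) : ℝ :=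
  ‖(WithLp.equiv p (Fin (K + 1) → ℝ)).symm v‖

/-- The `p`-norm network distance: minimum over correspondences `C` of the `p`-norm of the
vector `(Γ^0_{X,Y}(C), …, Γ^K_{X,Y}(C))`. -/
noncomputable def dNp {K : ℕ} {X Y : Type} [Fintype X] [Nonempty X] [Fintype Y] [Nonempty Y]
    (p : ℝ≥0∞) [Fact (1 ≤ p)] (NX : HONetwork K X) (NY : HONetwork K Y) : ℝ :=
  sInf { v : ℝ | ∃ C : Set (X × Y), IsCorrespondence C ∧
    v = pNorm K p (fun k : Fin (K + 1) => Gamma NX NY (k : ℕ) C) }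

/-- Two `K`-order networks are `k`-isomorphic if a bijection of the node sets preserves the
`k`-order relationship functions. -/
def kIsomorphic {K : ℕ} {X Y : Type} [Fintype X] [Nonempty X] [Fintype Y] [Nonempty Y]
    (k : ℕ) (NX : HONetwork K X) (NY : HONetwork K Y) : Prop :=
  ∃ φ : X ≃ Y, ∀ t : Fin (k + 1) → X, NY.r k (fun i => φ (t i)) = NX.r k t

/-- Two `K`-order networks are isomorphic if a bijection of the node sets preserves the
`k`-order relationship functions for all `0 ≤ k ≤ K`. -/
def Isomorphic {K : ℕ} {X Y : Type} [Fintype X] [Nonempty X] [Fintype Y] [Nonempty Y]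
    (NX : HONetwork K X) (NY : HONetwork K Y) : Prop :=
  ∃ φ : X ≃ Y, ∀ k, k ≤ K → ∀ t : Fin (k + 1) → X, NY.r k (fun i => φ (t i)) = NX.r k t

/-- A `K`-order dissimilarity network: a `K`-order network whose relationship functions
decompose as `r^k = d^k + ε · rank`, with nonnegative dissimilarity functions `d^k`
satisfying the order increasing property, and `0 < ε ≤ 1 − (1/K) · max d^K`. -/
structure DissimNetwork (K : ℕ) (X : Type) [Fintype X] [Nonempty X]
    extends HONetwork K X where
  dfun : ∀ k : ℕ, (Fin (k + 1) → X) → ℝ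
  eps : ℝ
  dfun_nonneg : ∀ k, k ≤ K → ∀ t : Fin (k + 1) → X, 0 ≤ dfun k t
  decomp : ∀ k, k ≤ K → ∀ t : Fin (k + 1) → X,
    r k t = dfun k t + eps * (tupleRank t : ℝ)
  order_incr : ∀ k : ℕ, k + 1 ≤ K → ∀ t : Fin (k + 2) → X,
    dfun k (fun i : Fin (k + 1) => t i.castSucc) ≤ dfun (k + 1) t
  eps_pos : 0 < eps
  eps_le : ∀ t : Fin (K + 1) → X, eps ≤ 1 - (1 / (K : ℝ)) * dfun K t

/-- A `K`-order proximity network: a `K`-order network whose relationship functions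
decompose as `r^k = p^k − ε · rank`, with nonnegative proximity functions `p^k`
satisfying the order decreasing property, and `0 < ε ≤ (1/K) · min p^K`. -/
structure ProxNetwork (K : ℕ) (X : Type) [Fintype X] [Nonempty X]
    extends HONetwork K X where
  pfun : ∀ k : ℕ, (Fin (k + 1) → X) → ℝ
  eps : ℝ
  pfun_nonneg : ∀ k, k ≤ K → ∀ t : Fin (k + 1) → X, 0 ≤ pfun k t
  decomp : ∀ k, k ≤ K → ∀ t : Fin (k + 1) → X,
    r k t = pfun k t - eps * (tupleRank t : ℝ)
  order_decr : ∀ k : ℕ, k + 1 ≤ K → ∀ t : Fin (k + 2) → X,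
    pfun (k + 1) t ≤ pfun k (fun i : Fin (k + 1) => t i.castSucc)
  eps_pos : 0 < eps
  eps_le : ∀ t : Fin (K + 1) → X, eps ≤ (1 / (K : ℝ)) * pfun K t

/-!
Correspondences can be inverted and composed. Inverting a correspondence does not change `Γ^k`,
composing `C₁ ⊆ X × Z` with `C₂ ⊆ Z × Y` gives `Γ^k(C₁ ○ C₂) ≤ Γ^k(C₁) + Γ^k(C₂)` (route each
`|r_X − r_Y|` through an intermediate tuple in `Z`), and the graph of an isomorphism has
`Γ^k = 0`. There are only finitely many correspondences, so `d_{N,p}` is attained; composing two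
optimal correspondences and using that the `p`-norm is monotone on nonnegative vectors and
subadditive gives the triangle inequality.
-/

open SetRel

theorem PiLp.norm_le_norm_of_forall_norm_le {p : ℝ≥0∞} (hp : p ≠ 0) {ι : Type*} [Fintype ι]
    {β : ι → Type*} [∀ i, SeminormedAddCommGroup (β i)] {x y : PiLp p β}
    (h : ∀ i, ‖x i‖ ≤ ‖y i‖) : ‖x‖ ≤ ‖y‖ := by
  rcases eq_or_ne p ∞ with rfl | hp_top
  · rw [PiLp.norm_eq_ciSup, PiLp.norm_eq_ciSup]
    exact ciSup_mono (Set.finite_range _).bddAbove h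
  · have hp_pos : 0 < p.toReal := ENNReal.toReal_pos hp hp_top
    rw [PiLp.norm_eq_sum hp_pos, PiLp.norm_eq_sum hp_pos]
    gcongr with i
    exact h i

section PNorm

variable {K : ℕ} (p : ℝ≥0∞) [Fact (1 ≤ p)]

theorem pNorm_nonneg (v : Fin (K + 1) → ℝ) : 0 ≤ pNorm K p v :=
  norm_nonneg _

theorem pNorm_zero : pNorm K p 0 = 0 :=
  norm_zero

theorem pNorm_add_le (u v : Fin (K + 1) → ℝ) : pNorm K p (u + v) ≤ pNorm K p u + pNorm K p v :=
  norm_add_le _ _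

theorem pNorm_mono {u v : Fin (K + 1) → ℝ} (hu : 0 ≤ u) (huv : u ≤ v) :
    pNorm K p u ≤ pNorm K p v :=
  PiLp.norm_le_norm_of_forall_norm_le (one_pos.trans_le Fact.out).ne' fun i => by
    simpa [abs_of_nonneg (hu i), abs_of_nonneg ((hu i).trans (huv i))] using huv i

end PNorm

section Correspondence

variable {X Y Z : Type}

theorem isCorrespondence_univ [Nonempty X] [Nonempty Y] :
    IsCorrespondence (Set.univ : Set (X × Y)) :=
  ⟨fun _ => ⟨Classical.arbitrary _, trivial⟩, fun _ => ⟨Classical.arbitrary _, trivial⟩⟩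

theorem isCorrespondence_graph (φ : X ≃ Y) : IsCorrespondence (Function.graph φ) :=
  ⟨fun x => ⟨φ x, rfl⟩, fun y => ⟨φ.symm y, φ.apply_symm_apply y⟩⟩

theorem IsCorrespondence.inv {C : SetRel X Y} (hC : IsCorrespondence C) :
    IsCorrespondence C.inv :=
  ⟨hC.2, hC.1⟩

theorem IsCorrespondence.comp {C₁ : SetRel X Z} {C₂ : SetRel Z Y} (h₁ : IsCorrespondence C₁)
    (h₂ : IsCorrespondence C₂) : IsCorrespondence (C₁ ○ C₂) := by
  constructor
  · intro x
    obtain ⟨z, hxz⟩ := h₁.1 x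
    obtain ⟨y, hzy⟩ := h₂.1 z
    exact ⟨y, z, hxz, hzy⟩
  · intro y
    obtain ⟨z, hzy⟩ := h₂.2 y
    obtain ⟨x, hxz⟩ := h₁.2 z
    exact ⟨x, z, hxz, hzy⟩

end Correspondence

section Gamma

variable {K : ℕ} {X Y Z : Type} [Fintype X] [Nonempty X] [Fintype Y] [Nonempty Y]
  [Fintype Z] [Nonempty Z] (NX : HONetwork K X) (NY : HONetwork K Y) (k : ℕ)

theorem abs_sub_le_Gamma {C : Set (X × Y)} {tx : Fin (k + 1) → X} {ty : Fin (k + 1) → Y}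
    (h : ∀ i, (tx i, ty i) ∈ C) : |NX.r k tx - NY.r k ty| ≤ Gamma NX NY k C := by
  have hbdd : BddAbove (Set.range fun t : (Fin (k + 1) → X) × (Fin (k + 1) → Y) =>
      |NX.r k t.1 - NY.r k t.2|) :=
    (Set.finite_range _).bddAbove
  refine le_csSup (hbdd.mono ?_) ⟨tx, ty, h, rfl⟩
  rintro _ ⟨tx', ty', -, rfl⟩
  exact ⟨(tx', ty'), rfl⟩

/-- The bound `0 ≤ c` replaces nonemptiness of `C`, since `sSup ∅ = 0` in `ℝ`. -/
theorem Gamma_le {C : Set (X × Y)} {c : ℝ}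
    (h : ∀ tx ty, (∀ i, (tx i, ty i) ∈ C) → |NX.r k tx - NY.r k ty| ≤ c) (hc : 0 ≤ c) :
    Gamma NX NY k C ≤ c :=
  Real.sSup_le (by rintro _ ⟨tx, ty, hC, rfl⟩; exact h tx ty hC) hc

theorem Gamma_nonneg (C : Set (X × Y)) : 0 ≤ Gamma NX NY k C :=
  Real.sSup_nonneg (by rintro _ ⟨tx, ty, -, rfl⟩; exact abs_nonneg _)

theorem Gamma_inv (C : SetRel X Y) : Gamma NY NX k C.inv = Gamma NX NY k C := by
  unfold Gamma
  congr 1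
  ext v
  constructor <;> rintro ⟨t, t', h, rfl⟩ <;> exact ⟨t', t, h, abs_sub_comm _ _⟩

theorem Gamma_comp_le (NZ : HONetwork K Z) (C₁ : SetRel X Z) (C₂ : SetRel Z Y) :
    Gamma NX NY k (C₁ ○ C₂) ≤ Gamma NX NZ k C₁ + Gamma NZ NY k C₂ := by
  refine Gamma_le NX NY k (fun tx ty h => ?_)
    (add_nonneg (Gamma_nonneg NX NZ k C₁) (Gamma_nonneg NZ NY k C₂))
  choose tz hxz hzy using h
  calc |NX.r k tx - NY.r k ty|
      ≤ |NX.r k tx - NZ.r k tz| + |NZ.r k tz - NY.r k ty| := abs_sub_le _ _ _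
    _ ≤ Gamma NX NZ k C₁ + Gamma NZ NY k C₂ :=
      add_le_add (abs_sub_le_Gamma NX NZ k hxz) (abs_sub_le_Gamma NZ NY k hzy)

theorem Gamma_graph_eq_zero (f : X → Y) (hf : ∀ t, NY.r k (fun i => f (t i)) = NX.r k t) :
    Gamma NX NY k (Function.graph f) = 0 := by
  refine le_antisymm (Gamma_le NX NY k (fun tx ty h => ?_) le_rfl) (Gamma_nonneg NX NY k _)
  obtain rfl : (fun i => f (tx i)) = ty := funext h
  rw [hf, sub_self, abs_zero]

end Gamma

section DNp

variable {K : ℕ} {X Y Z : Type} [Fintype X] [Nonempty X] [Fintype Y] [Nonempty Y]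
  [Fintype Z] [Nonempty Z] (p : ℝ≥0∞) [Fact (1 ≤ p)] (NX : HONetwork K X) (NY : HONetwork K Y)

theorem dNp_le {C : Set (X × Y)} (hC : IsCorrespondence C) :
    dNp p NX NY ≤ pNorm K p (fun k : Fin (K + 1) => Gamma NX NY k C) :=
  csInf_le ⟨0, by rintro _ ⟨C, -, rfl⟩; exact pNorm_nonneg p _⟩ ⟨C, hC, rfl⟩

theorem exists_isCorrespondence_dNp_eq : ∃ C : Set (X × Y), IsCorrespondence C ∧
    dNp p NX NY = pNorm K p (fun k : Fin (K + 1) => Gamma NX NY k C) := by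
  refine Set.Nonempty.csInf_mem (s := {v : ℝ | ∃ C : Set (X × Y), IsCorrespondence C ∧
      v = pNorm K p (fun k : Fin (K + 1) => Gamma NX NY k C)})
    ⟨_, Set.univ, isCorrespondence_univ, rfl⟩ ((Set.finite_range fun C : Set (X × Y) =>
      pNorm K p (fun k : Fin (K + 1) => Gamma NX NY k C)).subset ?_)
  rintro _ ⟨C, -, rfl⟩
  exact ⟨C, rfl⟩

theorem dNp_nonneg : 0 ≤ dNp p NX NY :=
  Real.sInf_nonneg (by rintro _ ⟨C, -, rfl⟩; exact pNorm_nonneg p _)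

theorem dNp_le_dNp_swap : dNp p NX NY ≤ dNp p NY NX := by
  obtain ⟨C, hC, hd⟩ := exists_isCorrespondence_dNp_eq p NY NX
  calc dNp p NX NY ≤ pNorm K p (fun k : Fin (K + 1) => Gamma NX NY k (SetRel.inv C)) :=
        dNp_le p NX NY hC.inv
    _ = dNp p NY NX := by simp only [Gamma_inv, hd]

theorem dNp_comm : dNp p NX NY = dNp p NY NX :=
  le_antisymm (dNp_le_dNp_swap p NX NY) (dNp_le_dNp_swap p NY NX)

theorem dNp_eq_zero_of_isomorphic (h : Isomorphic NX NY) : dNp p NX NY = 0 := by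
  obtain ⟨φ, hφ⟩ := h
  refine le_antisymm ?_ (dNp_nonneg p NX NY)
  calc dNp p NX NY
      ≤ pNorm K p (fun k : Fin (K + 1) => Gamma NX NY k (Function.graph φ)) :=
        dNp_le p NX NY (isCorrespondence_graph φ)
    _ = pNorm K p 0 := by
        congr 1
        funext k
        exact Gamma_graph_eq_zero NX NY k φ (hφ k k.is_le)
    _ = 0 := pNorm_zero p

theorem dNp_triangle (NZ : HONetwork K Z) : dNp p NX NY ≤ dNp p NX NZ + dNp p NZ NY := by
  obtain ⟨C₁, hC₁, h₁⟩ := exists_isCorrespondence_dNp_eq p NX NZ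
  obtain ⟨C₂, hC₂, h₂⟩ := exists_isCorrespondence_dNp_eq p NZ NY
  rw [h₁, h₂]
  calc dNp p NX NY
      ≤ pNorm K p (fun k : Fin (K + 1) => Gamma NX NY k (C₁ ○ C₂)) :=
        dNp_le p NX NY (hC₁.comp hC₂)
    _ ≤ pNorm K p ((fun k : Fin (K + 1) => Gamma NX NZ k C₁) +
        fun k : Fin (K + 1) => Gamma NZ NY k C₂) :=
        pNorm_mono p (fun k => Gamma_nonneg NX NY k _) (fun k => Gamma_comp_le NX NY k NZ C₁ C₂)
    _ ≤ _ := pNorm_add_le p _ _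

end DNp

/-- For every `K` and every `1 ≤ p ≤ ∞`, the `p`-norm network distance `d_{N,p}`
is a pseudometric on the space of `K`-order networks modulo isomorphism. -/
theorem dNp_pseudometric (K : ℕ) (p : ℝ≥0∞) [Fact (1 ≤ p)]
    (X Y Z : Type) [Fintype X] [Nonempty X] [Fintype Y] [Nonempty Y] [Fintype Z] [Nonempty Z]
    (NX : HONetwork K X) (NY : HONetwork K Y) (NZ : HONetwork K Z) :
    0 ≤ dNp p NX NY ∧
    dNp p NX NY = dNp p NY NX ∧
    (Isomorphic NX NY → dNp p NX NY = 0) ∧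
    dNp p NX NY ≤ dNp p NX NZ + dNp p NZ NY :=
  ⟨dNp_nonneg p NX NY, dNp_comm p NX NY, dNp_eq_zero_of_isomorphic p NX NY,
    dNp_triangle p NX NY NZ⟩
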